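/- arXiv:1802.02278 — 5 statements merged into one kernel-verified Lean document; each statement's English description precedes it below -/
import Mathlib

section
/- The admissible set 𝒢 of ideal MHD equals the set 𝒢* = { U = (ρ, m, B, E) : ρ > 0 and, for all v*, B* ∈ ℝ³, U·n* + |B*|²/2 > 0 }, where n* = (|v*|²/2, −v*, −B*, 1). -/
open scoped BigOperators

noncomputable section

/-- Euclidean dot product on ℝ³. -/
def dot3 (a b : Fin 3 → ℝ) : ℝ := ∑ j, a j * b j

/-- Squared Euclidean norm on ℝ³. -/
def normSq3 (a : Fin 3 → ℝ) : ℝ := ∑ j, (a j) ^ 2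

/-- Momentum components of a state `U = (ρ, m, B, E) ∈ ℝ⁸`. -/
def mC (U : Fin 8 → ℝ) : Fin 3 → ℝ := ![U 1, U 2, U 3]

/-- Magnetic-field components of a state. -/
def BC (U : Fin 8 → ℝ) : Fin 3 → ℝ := ![U 4, U 5, U 6]

/-- Velocity components `v = m / ρ`. -/
def velC (U : Fin 8 → ℝ) : Fin 3 → ℝ := fun j => mC U j / U 0

/-- Internal energy `𝓔(U) = E − (|m|²/ρ + |B|²)/2`. -/
def intE (U : Fin 8 → ℝ) : ℝ := U 7 - (normSq3 (mC U) / U 0 + normSq3 (BC U)) / 2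

/-- The admissible set `𝒢`. -/
def admisSet : Set (Fin 8 → ℝ) := {U | 0 < U 0 ∧ 0 < intE U}

/-- The vector `n* = (|v*|²/2, −v*, −B*, 1) ∈ ℝ⁸`. -/
def nstar (vs Bs : Fin 3 → ℝ) : Fin 8 → ℝ :=
  ![normSq3 vs / 2, -vs 0, -vs 1, -vs 2, -Bs 0, -Bs 1, -Bs 2, 1]

/-- Euclidean dot product on ℝ⁸. -/
def dot8 (U V : Fin 8 → ℝ) : ℝ := ∑ k, U k * V k

/-- Flux `F_i(U)` of a state `U` with assigned pressure `p`, in direction `i`. -/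
def flux (p : ℝ) (i : Fin 3) (U : Fin 8 → ℝ) : Fin 8 → ℝ :=
  let ρ := U 0
  let v := velC U
  let B := BC U
  let ptot := p + normSq3 B / 2
  ![ρ * v i,
    ρ * v i * v 0 - B i * B 0 + (if i = 0 then ptot else 0),
    ρ * v i * v 1 - B i * B 1 + (if i = 1 then ptot else 0),
    ρ * v i * v 2 - B i * B 2 + (if i = 2 then ptot else 0),
    v i * B 0 - B i * v 0,
    v i * B 1 - B i * v 1,
    v i * B 2 - B i * v 2,
    v i * (U 7 + ptot) - B i * dot3 v B]

/-- The fast-speed-type quantity built from a sound-speed-like value `cs`: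
`(1/√2)·√( cs² + |B|²/ρ + √((cs² + |B|²/ρ)² − 4cs²B_i²/ρ) )`. -/
def fastLike (cs : ℝ) (U : Fin 8 → ℝ) (i : Fin 3) : ℝ :=
  (1 / Real.sqrt 2) *
    Real.sqrt (cs ^ 2 + normSq3 (BC U) / U 0 +
      Real.sqrt ((cs ^ 2 + normSq3 (BC U) / U 0) ^ 2 - 4 * cs ^ 2 * (BC U i) ^ 2 / U 0))

/-- `𝓢_s = p/(ρ√(2e))` for a state `U` with pressure `p`. -/
def sSound (p : ℝ) (U : Fin 8 → ℝ) : ℝ :=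
  p / (U 0 * Real.sqrt (2 * (intE U / U 0)))

/-- `𝓢_i` for a state `U` with pressure `p`. -/
def sFast (p : ℝ) (U : Fin 8 → ℝ) (i : Fin 3) : ℝ := fastLike (sSound p U) U i

/-- `f(U, Ũ; σ) = (|B̃ − B|/√2)·√(σ²/ρ + (1−σ)²/ρ̃)`. -/
def fCoup (U Ut : Fin 8 → ℝ) (σ : ℝ) : ℝ :=
  (Real.sqrt (normSq3 (fun j => BC Ut j - BC U j)) / Real.sqrt 2) *
    Real.sqrt (σ ^ 2 / U 0 + (1 - σ) ^ 2 / Ut 0)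

/-- `α_i(U, Ũ; σ)` for states `U, Ũ` with pressures `p, p̃`. -/
def alphaSig (i : Fin 3) (U Ut : Fin 8 → ℝ) (p pt : ℝ) (σ : ℝ) : ℝ :=
  max (max (|velC U i| + sFast p U i) (|velC Ut i| + sFast pt Ut i))
      (|σ * velC U i + (1 - σ) * velC Ut i| + max (sFast p U i) (sFast pt Ut i))
  + fCoup U Ut σ

/-- `α_i(U, Ũ) = inf_{σ ∈ ℝ} α_i(U, Ũ; σ)`. -/
def alphaInf (i : Fin 3) (U Ut : Fin 8 → ℝ) (p pt : ℝ) : ℝ :=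
  ⨅ σ : ℝ, alphaSig i U Ut p pt σ

/-- Ideal-EOS pressure `p = (γ−1)ρe = (γ−1)𝓔(U)`. -/
def idealP (γ : ℝ) (U : Fin 8 → ℝ) : ℝ := (γ - 1) * intE U

/-- Ideal-EOS sound speed `𝓒_s = √(γp/ρ)`. -/
def cSound (γ : ℝ) (U : Fin 8 → ℝ) : ℝ := Real.sqrt (γ * idealP γ U / U 0)

/-- Ideal-EOS fast speed `𝓒_i`. -/
def cFast (γ : ℝ) (U : Fin 8 → ℝ) (i : Fin 3) : ℝ := fastLike (cSound γ U) U i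

/-- Ideal-EOS spectral radius `𝓡_i(U) = |v_i| + 𝓒_i`. -/
def specR (γ : ℝ) (i : Fin 3) (U : Fin 8 → ℝ) : ℝ := |velC U i| + cFast γ U i

/-- Pressure of a state under a general EOS function `P(ρ, e)`. -/
def presOf (P : ℝ → ℝ → ℝ) (U : Fin 8 → ℝ) : ℝ := P (U 0) (intE U / U 0)

/-- Lax–Friedrichs numerical flux with viscosity `α`, under EOS function `P`. -/
def lfFlux (P : ℝ → ℝ → ℝ) (α : ℝ) (i : Fin 3) (Um Up : Fin 8 → ℝ) : Fin 8 → ℝ :=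
  (1 / 2 : ℝ) • (flux (presOf P Um) i Um + flux (presOf P Up) i Up - α • (Up - Um))

/-- Lax–Friedrichs numerical flux with viscosity `α`, ideal EOS of index `γ`. -/
def lfFluxIdeal (γ : ℝ) (α : ℝ) (i : Fin 3) (Um Up : Fin 8 → ℝ) : Fin 8 → ℝ :=
  (1 / 2 : ℝ) • (flux (idealP γ Um) i Um + flux (idealP γ Up) i Up - α • (Up - Um))

/-- The admissible set `𝒢` equals
`𝒢* = { U : ρ > 0 ∧ ∀ v* B*, U·n* + |B*|²/2 > 0 }`. -/
theorem admisSet_eq_star :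
    admisSet = {U : Fin 8 → ℝ | 0 < U 0 ∧
      ∀ vs Bs : Fin 3 → ℝ, 0 < dot8 U (nstar vs Bs) + normSq3 Bs / 2} := by
  have hkey : ∀ (U : Fin 8 → ℝ), U 0 ≠ 0 → ∀ vs Bs : Fin 3 → ℝ,
      dot8 U (nstar vs Bs) + normSq3 Bs / 2 =
      intE U + (U 0 / 2) * normSq3 (fun j => vs j - mC U j / U 0)
        + (1/2) * normSq3 (fun j => Bs j - BC U j) := by
    intro U h0 vs Bs
    have n0 : nstar vs Bs 0 = normSq3 vs / 2 := rfl
    have n1 : nstar vs Bs 1 = -vs 0 := rfl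
    have n2 : nstar vs Bs 2 = -vs 1 := rfl
    have n3 : nstar vs Bs 3 = -vs 2 := rfl
    have n4 : nstar vs Bs 4 = -Bs 0 := rfl
    have n5 : nstar vs Bs 5 = -Bs 1 := rfl
    have n6 : nstar vs Bs 6 = -Bs 2 := rfl
    have n7 : nstar vs Bs 7 = 1 := rfl
    simp [dot8, intE, normSq3, mC, BC, Fin.sum_univ_eight, Fin.sum_univ_three,
      n0, n1, n2, n3, n4, n5, n6, n7]
    field_simp
    ring
  ext U
  simp only [admisSet, Set.mem_setOf_eq]
  constructor
  · rintro ⟨hρ, hE⟩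
    refine ⟨hρ, fun vs Bs => ?_⟩
    rw [hkey U hρ.ne' vs Bs]
    have h1 : 0 ≤ normSq3 (fun j => vs j - mC U j / U 0) :=
      Finset.sum_nonneg fun j _ => sq_nonneg _
    have h2 : 0 ≤ normSq3 (fun j => Bs j - BC U j) :=
      Finset.sum_nonneg fun j _ => sq_nonneg _
    nlinarith
  · rintro ⟨hρ, h⟩
    refine ⟨hρ, ?_⟩
    have := h (velC U) (BC U)
    rw [hkey U hρ.ne' (velC U) (BC U)] at this
    have e1 : (fun j => velC U j - mC U j / U 0) = fun _ => 0 := by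
      funext j; simp [velC]
    have e2 : (fun j => BC U j - BC U j) = fun _ => 0 := by funext j; ring_nf
    rw [e1, e2] at this
    simpa [normSq3] using this
end
end

section
/- The Lax–Friedrichs splitting property fails for ideal MHD: for every adiabatic index γ > 1 and every constant χ ≥ 1 there exists a state U ∈ 𝒢 (with the ideal EOS of index γ) such that, with α = χ·𝓡₁(U), both U − F₁(U)/α ∉ 𝒢 and U + F₁(U)/α ∉ 𝒢. Hence the property 'U ± F_i(U)/α ∈ 𝒢 for all U ∈ 𝒢 and all α ≥ χ·𝓡_i(U)' does not hold. -/
open scoped BigOperators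

noncomputable section

set_option maxHeartbeats 1000000 in
/-- the Lax–Friedrichs splitting property fails for ideal MHD:
for every `γ > 1` and `χ ≥ 1` there is `U ∈ 𝒢` (ideal EOS of index `γ`) such
that with `α = χ·𝓡₁(U)`, neither `U − F₁(U)/α` nor `U + F₁(U)/α` is in `𝒢`. -/
theorem lf_splitting_fails (γ χ : ℝ) (hγ : 1 < γ) (hχ : 1 ≤ χ) :
    ∃ U ∈ admisSet,
      U - (χ * specR γ 0 U)⁻¹ • flux (idealP γ U) 0 U ∉ admisSet ∧
      U + (χ * specR γ 0 U)⁻¹ • flux (idealP γ U) 0 U ∉ admisSet := by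

  have hχ0 : (0:ℝ) < χ := lt_of_lt_of_le one_pos hχ
  have hγ0 : (0:ℝ) < γ := lt_trans one_pos hγ
  have hγ1 : (0:ℝ) < γ - 1 := by linarith
  set b2 : ℝ := 8 * χ ^ 2 * γ ^ 2 with hb2def
  have hb2pos : 0 < b2 := by positivity
  set b : ℝ := Real.sqrt b2 with hbdef
  have hbsq : b ^ 2 = b2 := Real.sq_sqrt hb2pos.le
  set U : Fin 8 → ℝ := ![1, 0, 0, 0, 0, b, 0, 1 + b2 / 2] with hU
  have hU0 : U 0 = 1 := rfl
  have hU1 : U 1 = 0 := rfl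
  have hU2 : U 2 = 0 := rfl
  have hU3 : U 3 = 0 := rfl
  have hU4 : U 4 = 0 := rfl
  have hU5 : U 5 = b := rfl
  have hU6 : U 6 = 0 := rfl
  have hU7 : U 7 = 1 + b2 / 2 := rfl
  have hmsq : normSq3 (mC U) = 0 := by
    simp [normSq3, mC, Fin.sum_univ_three, hU1, hU2, hU3]
  have hBsq : normSq3 (BC U) = b2 := by
    simp [normSq3, BC, Fin.sum_univ_three, hU4, hU5, hU6, hbsq]
  have hintE : intE U = 1 := by
    rw [intE, hU7, hmsq, hBsq, hU0]; ring
  have hmem : U ∈ admisSet := by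
    constructor
    · show (0:ℝ) < 1; norm_num
    · rw [hintE]; norm_num
  have hvel : ∀ j, velC U j = 0 := by
    intro j
    fin_cases j <;> simp [velC, mC, hU1, hU2, hU3]
  have hp : idealP γ U = γ - 1 := by
    rw [idealP, hintE]; ring
  have hcs : cSound γ U = Real.sqrt (γ * (γ - 1)) := by
    rw [cSound, hp, hU0]; norm_num
  have hB0 : BC U 0 = 0 := rfl
  set A : ℝ := γ * (γ - 1) + b2 with hAdef
  have hApos : 0 < A := by positivity
  have hcf : cFast γ U 0 = Real.sqrt A := by
    rw [cFast, fastLike, hcs, hBsq, hB0, hU0]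
    rw [Real.sq_sqrt (by positivity : (0:ℝ) ≤ γ * (γ - 1))]
    have h1 : γ * (γ - 1) + b2 / 1 + Real.sqrt ((γ * (γ - 1) + b2 / 1) ^ 2 - 4 * (γ * (γ - 1)) * 0 ^ 2 / 1) = 2 * A := by
      have : (γ * (γ - 1) + b2 / 1) ^ 2 - 4 * (γ * (γ - 1)) * 0 ^ 2 / 1 = A ^ 2 := by
        rw [hAdef]; ring
      rw [this, Real.sqrt_sq hApos.le, hAdef]; ring
    rw [h1, show (2 : ℝ) * A = 2 * A from rfl, Real.sqrt_mul (by norm_num : (0:ℝ) ≤ 2)]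
    rw [one_div, inv_mul_eq_div, mul_comm, mul_div_assoc, div_self (by positivity : Real.sqrt 2 ≠ 0), mul_one]
  have hspec : specR γ 0 U = Real.sqrt A := by
    rw [specR, hvel 0, hcf]; simp
  set α : ℝ := χ * Real.sqrt A with hαdef
  have hαpos : 0 < α := by positivity
  have hαsq : α ^ 2 = χ ^ 2 * A := by
    rw [hαdef, mul_pow, Real.sq_sqrt hApos.le]
  -- flux computation
  set pt : ℝ := (γ - 1) + b2 / 2 with hptdef
  have hflux : flux (idealP γ U) 0 U = ![0, pt, 0, 0, 0, 0, 0, 0] := by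
    funext k
    fin_cases k <;>
      simp [flux, hp, hB0, dot3, normSq3, Fin.sum_univ_three, velC, mC, BC,
        hU0, hU1, hU2, hU3, hU4, hU5, hU6, hU7, hptdef, hbsq]
  -- the key inequality: 2 χ² A ≤ pt²
  have hkey : 2 * χ ^ 2 * A ≤ pt ^ 2 := by
    rw [hAdef, hptdef, hb2def]
    have h1 : 0 ≤ 2 * χ ^ 2 * γ * ((γ - 1) * (4 * γ - 1)) :=
      mul_nonneg (by positivity) (mul_nonneg hγ1.le (by linarith))
    have h2 : 0 ≤ 16 * χ ^ 4 * γ ^ 2 * (γ ^ 2 - 1) := by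
      have hq : γ ^ 2 - 1 = (γ - 1) * (γ + 1) := by ring
      exact mul_nonneg (by positivity) (hq ▸ mul_nonneg hγ1.le (by linarith))
    have expand : (γ - 1 + 8 * χ ^ 2 * γ ^ 2 / 2) ^ 2
        = ((γ - 1) ^ 2 + 2 * χ ^ 2 * γ * ((γ - 1) * (4 * γ - 1))
            + 16 * χ ^ 4 * γ ^ 2 * (γ ^ 2 - 1))
          + 2 * χ ^ 2 * (γ * (γ - 1) + 8 * χ ^ 2 * γ ^ 2) := by ring
    rw [expand]
    exact le_add_of_nonneg_left (add_nonneg (add_nonneg (sq_nonneg _) h1) h2)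
  set F : Fin 8 → ℝ := ![0, pt, 0, 0, 0, 0, 0, 0] with hF
  have hF0 : F 0 = 0 := rfl
  have hF1 : F 1 = pt := rfl
  have hF2 : F 2 = 0 := rfl
  have hF3 : F 3 = 0 := rfl
  have hF4 : F 4 = 0 := rfl
  have hF5 : F 5 = 0 := rfl
  have hF6 : F 6 = 0 := rfl
  have hF7 : F 7 = 0 := rfl
  have hint2 : ∀ c : ℝ, intE (U + c • flux (idealP γ U) 0 U) = 1 - c ^ 2 * pt ^ 2 / 2 := by
    intro c
    rw [hflux]
    simp only [intE, normSq3, mC, BC, Fin.sum_univ_three, Matrix.cons_val_zero,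
      Matrix.cons_val_one, Matrix.head_cons, Pi.add_apply, Pi.smul_apply, smul_eq_mul,
      Matrix.cons_val_two, Matrix.tail_cons]
    rw [hF0, hF1, hF2, hF3, hF4, hF5, hF6, hF7, hU0, hU1, hU2, hU3, hU4, hU5, hU6, hU7]
    simp only [mul_zero, add_zero, zero_add]
    rw [hbsq]
    ring
  have h2α : (1:ℝ) ≤ (α⁻¹) ^ 2 * pt ^ 2 / 2 := by
    have hkey' : 2 * α ^ 2 ≤ pt ^ 2 := by rw [hαsq, ← mul_assoc]; exact hkey
    calc (1:ℝ) = (α⁻¹) ^ 2 * (2 * α ^ 2) / 2 := by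
          field_simp
      _ ≤ (α⁻¹) ^ 2 * pt ^ 2 / 2 := by gcongr
  refine ⟨U, hmem, ?_, ?_⟩
  · rw [hspec]
    intro hc
    have h := hc.2
    have heq : U - (χ * Real.sqrt A)⁻¹ • flux (idealP γ U) 0 U
        = U + (-(χ * Real.sqrt A)⁻¹) • flux (idealP γ U) 0 U := by
      rw [neg_smul, ← sub_eq_add_neg]
    rw [heq, hint2, neg_pow, ← hαdef] at h
    simp only [neg_neg, one_mul, Even.neg_pow (by norm_num : Even 2)] at h
    linarith [h2α, h]
  · rw [hspec]
    intro hc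
    have h := hc.2
    rw [hint2, ← hαdef] at h
    linarith [h2α, h]
end
end

section
/- One-state inequality: let U ∈ 𝒢 have pressure p > 0, let i ∈ {1,2,3}, and let v*, B* ∈ ℝ³. Then for every real α with |α| > α̂_i(U, v_i*) := max{|v_i|, |v_i*|} + 𝓢_i, one has ( U + F_i(U)/α )·n* + |B*|²/2 + (1/α)·( v_i*·|B*|²/2 − B_i·(v*·B*) ) > 0. -/
open scoped BigOperators

noncomputable section

/-!
Write `θ = α⁻¹`, `d = v − v*` and `g = B − B*`. The left-hand side equals
`(𝓔 + ρ|d|²/2)(1 + θ v_i) + (|g|²/2)(1 + θ v*_i) + θ (p d_i + d_i (B·g) − B_i (d·g))`,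
and the bound on `|α|` gives `1 + θ v_i > |θ| 𝓢_i` and `1 + θ v*_i > |θ| 𝓢_i`.
It therefore suffices that `|p d_i + d_i (B·g) − B_i (d·g)| ≤ 𝓢_i (𝓔 + ρ|d|²/2 + |g|²/2)`.
The `i`-th components cancel in `d_i (B·g) − B_i (d·g)`, so Cauchy–Schwarz on the transverse
components reduces this to an inequality between quadratic forms in three scalars. That one holds
because `𝓢_s² = p²/(2ρ𝓔)` and `𝓢_i²` is the larger root of `X² − (𝓢_s² + |B|²/ρ) X + 𝓢_s² B_i²/ρ`:
multiplied by a positive factor, its defect is a sum of squares.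
-/

open Finset

theorem le_larger_root_and_isRoot {c q r : ℝ} (hc : 0 ≤ c) (hrq : r ≤ q) :
    c ≤ (c + q + √((c + q) ^ 2 - 4 * c * r)) / 2 ∧ q ≤ (c + q + √((c + q) ^ 2 - 4 * c * r)) / 2 ∧
      ((c + q + √((c + q) ^ 2 - 4 * c * r)) / 2) ^ 2
        - (c + q) * ((c + q + √((c + q) ^ 2 - 4 * c * r)) / 2) + c * r = 0 := by
  have hdisc : (c - q) ^ 2 ≤ (c + q) ^ 2 - 4 * c * r := by
    nlinarith [mul_nonneg hc (sub_nonneg.2 hrq)]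
  have hsq := Real.sq_sqrt ((sq_nonneg _).trans hdisc)
  have habs : |c - q| ≤ √((c + q) ^ 2 - 4 * c * r) := Real.abs_le_sqrt hdisc
  refine ⟨?_, ?_, by linear_combination hsq / 4⟩
  · linarith [le_abs_self (c - q)]
  · linarith [neg_abs_le (c - q)]

theorem linear_add_cross_le_speed_mul_energy {ρ En p c s a b x y z : ℝ} (hρ : 0 < ρ)
    (hc0 : 0 < c) (hc : 2 * ρ * En * c = p ^ 2) (hs : 0 ≤ s) (hcs : c ≤ s ^ 2)
    (hab : a ^ 2 + b ^ 2 ≤ ρ * s ^ 2)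
    (hroot : ρ * s ^ 4 - (ρ * c + a ^ 2 + b ^ 2) * s ^ 2 + c * a ^ 2 = 0) :
    p * x + b * z * x + a * y * z ≤ s * (En + ρ * x ^ 2 / 2 + ρ * y ^ 2 / 2 + z ^ 2 / 2) := by
  have hs0 : 0 < s := lt_of_le_of_ne hs (by rintro rfl; linarith)
  rw [← sub_nonneg]
  rcases hcs.eq_or_lt with hcs | hcs
  · have hb : b = 0 := by
      have hbs : b ^ 2 * s ^ 2 = 0 := by linear_combination -hroot - (ρ * s ^ 2 - a ^ 2) * hcs
      simpa [hs0.ne'] using hbs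
    subst hb
    have key : 2 * ρ * c * s * (s * (En + ρ * x ^ 2 / 2 + ρ * y ^ 2 / 2 + z ^ 2 / 2)
          - (p * x + 0 * z * x + a * y * z))
        = (s * p - ρ * c * x) ^ 2 + c * (ρ * s * y - a * z) ^ 2
          + c * (ρ * s ^ 2 - a ^ 2) * z ^ 2 := by
      linear_combination s ^ 2 * hc - ρ ^ 2 * c * x ^ 2 * hcs
    have : 0 ≤ ρ * s ^ 2 - a ^ 2 := by linarith
    refine (mul_nonneg_iff_of_pos_left (by positivity : 0 < 2 * ρ * c * s)).1 ?_
    rw [key]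
    positivity
  · have key : 2 * ρ * c * (s ^ 2 - c) * s
          * (s * (En + ρ * x ^ 2 / 2 + ρ * y ^ 2 / 2 + z ^ 2 / 2) - (p * x + b * z * x + a * y * z))
        = (s ^ 2 - c) * (s * p - ρ * c * x) ^ 2 + c * (ρ * (s ^ 2 - c) * x - b * s * z) ^ 2
          + c * (s ^ 2 - c) * (ρ * s * y - a * z) ^ 2 := by
      linear_combination s ^ 2 * (s ^ 2 - c) * hc + c * z ^ 2 * hroot
    have : 0 < s ^ 2 - c := sub_pos.2 hcs
    refine (mul_nonneg_iff_of_pos_left (by positivity : 0 < 2 * ρ * c * (s ^ 2 - c) * s)).1 ?_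
    rw [key]
    positivity

theorem abs_inv_mul_lt_one_add_inv_mul {u s α : ℝ} (h : |u| + s < |α|) :
    |α⁻¹| * s < 1 + α⁻¹ * u := by
  rcases eq_or_ne α 0 with rfl | hα
  · simp
  have h1 : |α⁻¹| * (|u| + s) < 1 := by
    rwa [abs_inv, inv_mul_lt_iff₀ (abs_pos.2 hα), mul_one]
  have h2 : -(α⁻¹ * u) ≤ |α⁻¹| * |u| := by
    rw [← abs_mul]
    exact neg_le_abs (α⁻¹ * u)
  linarith

theorem pos_of_abs_le_of_abs_mul_lt {En X Y C θ s a b : ℝ} (hE : 0 < En) (hX : 0 ≤ X)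
    (hY : 0 ≤ Y) (hC : |C| ≤ s * (En + X + Y)) (ha : |θ| * s < 1 + θ * a)
    (hb : |θ| * s < 1 + θ * b) :
    0 < (En + X) * (1 + θ * a) + Y * (1 + θ * b) + θ * C := by
  have h1 : (En + X) * (|θ| * s) < (En + X) * (1 + θ * a) :=
    mul_lt_mul_of_pos_left ha (by linarith)
  have h2 : Y * (|θ| * s) ≤ Y * (1 + θ * b) := mul_le_mul_of_nonneg_left hb.le hY
  have h3 : -(θ * C) ≤ |θ| * (s * (En + X + Y)) := by
    refine (neg_le_abs (θ * C)).trans ?_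
    rw [abs_mul]
    exact mul_le_mul_of_nonneg_left hC (abs_nonneg θ)
  linarith

theorem Real.abs_sum_mul_le_sqrt_mul_sqrt {ι : Type*} (s : Finset ι) (f g : ι → ℝ) :
    |∑ j ∈ s, f j * g j| ≤ √(∑ j ∈ s, f j ^ 2) * √(∑ j ∈ s, g j ^ 2) :=
  (Real.abs_le_sqrt (sum_mul_sq_le_sq_mul_sq s f g)).trans_eq
    (Real.sqrt_mul (sum_nonneg fun _ _ ↦ sq_nonneg _) _)

section TransverseComponents

variable {ι : Type*} [Fintype ι] [DecidableEq ι]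

theorem abs_cross_term_le (d B g : ι → ℝ) (i : ι) :
    |d i * ∑ j, B j * g j - B i * ∑ j, d j * g j|
      ≤ |d i| * √(∑ j ∈ univ.erase i, B j ^ 2) * √(∑ j ∈ univ.erase i, g j ^ 2)
        + |B i| * √(∑ j ∈ univ.erase i, d j ^ 2) * √(∑ j ∈ univ.erase i, g j ^ 2) := by
  have hcancel : d i * ∑ j, B j * g j - B i * ∑ j, d j * g j
      = d i * ∑ j ∈ univ.erase i, B j * g j - B i * ∑ j ∈ univ.erase i, d j * g j := by
    rw [← add_sum_erase _ _ (mem_univ i), ← add_sum_erase _ (fun j ↦ d j * g j) (mem_univ i)]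
    ring
  rw [hcancel, mul_assoc, mul_assoc]
  refine (abs_sub _ _).trans (add_le_add ?_ ?_) <;> rw [abs_mul] <;>
    exact mul_le_mul_of_nonneg_left (Real.abs_sum_mul_le_sqrt_mul_sqrt _ _ _) (abs_nonneg _)

theorem abs_flux_term_le_speed_mul_energy {ρ En p c s : ℝ} (d B g : ι → ℝ) (i : ι)
    (hρ : 0 < ρ) (hc0 : 0 < c) (hc : 2 * ρ * En * c = p ^ 2) (hs : 0 ≤ s) (hcs : c ≤ s ^ 2)
    (hB : ∑ j, B j ^ 2 ≤ ρ * s ^ 2)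
    (hroot : ρ * s ^ 4 - (ρ * c + ∑ j, B j ^ 2) * s ^ 2 + c * B i ^ 2 = 0) :
    |p * d i + d i * ∑ j, B j * g j - B i * ∑ j, d j * g j|
      ≤ s * (En + ρ / 2 * ∑ j, d j ^ 2 + (∑ j, g j ^ 2) / 2) := by
  have hsplit (f : ι → ℝ) : ∑ j, f j ^ 2 = f i ^ 2 + √(∑ j ∈ univ.erase i, f j ^ 2) ^ 2 := by
    rw [Real.sq_sqrt (sum_nonneg fun _ _ ↦ sq_nonneg _),
      add_sum_erase _ (fun j ↦ f j ^ 2) (mem_univ i)]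
  rw [hsplit B] at hB hroot
  have hcore := linear_add_cross_le_speed_mul_energy (a := |B i|)
    (b := √(∑ j ∈ univ.erase i, B j ^ 2)) (x := |d i|)
    (y := √(∑ j ∈ univ.erase i, d j ^ 2)) (z := √(∑ j ∈ univ.erase i, g j ^ 2)) hρ hc0
    (hc.trans (sq_abs p).symm) hs hcs (by rwa [sq_abs]) (by rw [sq_abs]; linear_combination hroot)
  calc |p * d i + d i * ∑ j, B j * g j - B i * ∑ j, d j * g j|
      ≤ |p| * |d i| + |d i * ∑ j, B j * g j - B i * ∑ j, d j * g j| := by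
        rw [add_sub_assoc, ← abs_mul]
        exact abs_add_le _ _
    _ ≤ |p| * |d i| + (|d i| * √(∑ j ∈ univ.erase i, B j ^ 2) * √(∑ j ∈ univ.erase i, g j ^ 2)
        + |B i| * √(∑ j ∈ univ.erase i, d j ^ 2) * √(∑ j ∈ univ.erase i, g j ^ 2)) :=
        add_le_add le_rfl (abs_cross_term_le d B g i)
    _ ≤ s * (En + ρ * |d i| ^ 2 / 2 + ρ * √(∑ j ∈ univ.erase i, d j ^ 2) ^ 2 / 2
        + √(∑ j ∈ univ.erase i, g j ^ 2) ^ 2 / 2) := by linarith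
    _ ≤ s * (En + ρ / 2 * ∑ j, d j ^ 2 + (∑ j, g j ^ 2) / 2) := by
        rw [hsplit d, hsplit g, sq_abs]
        exact mul_le_mul_of_nonneg_left (by linarith [sq_nonneg (g i)]) hs

end TransverseComponents

theorem fastLike_spec (cs : ℝ) (U : Fin 8 → ℝ) (i : Fin 3) (hρ : 0 < U 0) :
    0 ≤ fastLike cs U i ∧ cs ^ 2 ≤ fastLike cs U i ^ 2 ∧
      normSq3 (BC U) ≤ U 0 * fastLike cs U i ^ 2 ∧
      U 0 * fastLike cs U i ^ 4 - (U 0 * cs ^ 2 + normSq3 (BC U)) * fastLike cs U i ^ 2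
        + cs ^ 2 * BC U i ^ 2 = 0 := by
  set q := normSq3 (BC U) / U 0 with hq
  set r := BC U i ^ 2 / U 0 with hr
  have hBi : BC U i ^ 2 ≤ normSq3 (BC U) :=
    single_le_sum (fun j _ ↦ sq_nonneg (BC U j)) (mem_univ i)
  have hρq : U 0 * q = normSq3 (BC U) := mul_div_cancel₀ _ hρ.ne'
  have hρr : U 0 * r = BC U i ^ 2 := mul_div_cancel₀ _ hρ.ne'
  have hrq : r ≤ q := div_le_div_of_nonneg_right hBi hρ.le
  obtain ⟨hcs, hqs, hroot⟩ := le_larger_root_and_isRoot (sq_nonneg cs) hrq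
  have hsq : fastLike cs U i ^ 2 = (cs ^ 2 + q + √((cs ^ 2 + q) ^ 2 - 4 * cs ^ 2 * r)) / 2 := by
    have hr0 : 0 ≤ r := div_nonneg (sq_nonneg _) hρ.le
    have hD := Real.sqrt_nonneg ((cs ^ 2 + q) ^ 2 - 4 * cs ^ 2 * r)
    rw [fastLike, mul_div_assoc, ← hq, ← hr, mul_pow, div_pow, one_pow, Real.sq_sqrt zero_le_two,
      Real.sq_sqrt (by linarith [sq_nonneg cs])]
    ring
  refine ⟨by unfold fastLike; positivity, hsq ▸ hcs, ?_, ?_⟩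
  · rw [← hρq, hsq]
    exact mul_le_mul_of_nonneg_left hqs hρ.le
  · rw [show fastLike cs U i ^ 4 = (fastLike cs U i ^ 2) ^ 2 by ring, hsq, ← hρq, ← hρr]
    linear_combination U 0 * hroot

theorem sSound_sq {p : ℝ} {U : Fin 8 → ℝ} (hU : U ∈ admisSet) :
    2 * U 0 * intE U * sSound p U ^ 2 = p ^ 2 := by
  obtain ⟨hρ, hE⟩ := hU
  rw [sSound, div_pow, mul_pow, Real.sq_sqrt (by positivity)]
  field_simp

theorem dot8_add_smul_flux_nstar_eq (p θ : ℝ) (i : Fin 3) (U : Fin 8 → ℝ) (vs Bs : Fin 3 → ℝ)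
    (hρ : U 0 ≠ 0) :
    dot8 (U + θ • flux p i U) (nstar vs Bs) + normSq3 Bs / 2
        + θ * (vs i * (normSq3 Bs / 2) - BC U i * dot3 vs Bs)
      = (intE U + U 0 / 2 * normSq3 (velC U - vs)) * (1 + θ * velC U i)
        + normSq3 (BC U - Bs) / 2 * (1 + θ * vs i)
        + θ * (p * (velC U - vs) i + (velC U - vs) i * dot3 (BC U) (BC U - Bs)
          - BC U i * dot3 (velC U - vs) (BC U - Bs)) := by
  fin_cases i <;>
  · simp only [dot8, dot3, normSq3, nstar, flux, intE, velC, mC, BC, Fin.sum_univ_eight,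
      Fin.sum_univ_three, Pi.add_apply, Pi.sub_apply, Pi.smul_apply, smul_eq_mul, Fin.isValue,
      Fin.zero_eta, Fin.mk_one, Fin.reduceFinMk, Matrix.cons_val_zero, Matrix.cons_val_one,
      Matrix.cons_val, ↓reduceIte, Fin.reduceEq, add_zero]
    field_simp
    ring

/-- one-state inequality: for `U ∈ 𝒢` with pressure `p > 0`,
`i ∈ {1,2,3}`, `v*, B* ∈ ℝ³`, and `|α| > α̂_i(U, v_i*) = max{|v_i|, |v_i*|} + 𝓢_i`,
`(U + F_i(U)/α)·n* + |B*|²/2 + (1/α)(v_i*|B*|²/2 − B_i(v*·B*)) > 0`. -/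
theorem one_state_inequality (i : Fin 3) (U : Fin 8 → ℝ) (hU : U ∈ admisSet)
    (p : ℝ) (hp : 0 < p) (vs Bs : Fin 3 → ℝ) (α : ℝ)
    (hα : max |velC U i| |vs i| + sFast p U i < |α|) :
    0 < dot8 (U + α⁻¹ • flux p i U) (nstar vs Bs) + normSq3 Bs / 2
        + α⁻¹ * (vs i * (normSq3 Bs / 2) - BC U i * dot3 vs Bs) := by
  have hc := sSound_sq (p := p) hU
  obtain ⟨hρ, hE⟩ := hU
  obtain ⟨hs, hcs, hB, hroot⟩ := fastLike_spec (sSound p U) U i hρ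
  have hc0 : 0 < sSound p U ^ 2 :=
    pos_of_mul_pos_right (hc ▸ by positivity : 0 < 2 * U 0 * intE U * sSound p U ^ 2)
      (by positivity)
  rw [dot8_add_smul_flux_nstar_eq p α⁻¹ i U vs Bs hρ.ne']
  refine pos_of_abs_le_of_abs_mul_lt hE (by unfold normSq3; positivity)
    (by unfold normSq3; positivity)
    (abs_flux_term_le_speed_mul_energy (velC U - vs) (BC U) (BC U - Bs) i hρ hc0 hc hs hcs hB hroot)
    (abs_inv_mul_lt_one_add_inv_mul ?_) (abs_inv_mul_lt_one_add_inv_mul ?_)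
  · exact (add_le_add (le_max_left _ _) le_rfl).trans_lt hα
  · exact (add_le_add (le_max_right _ _) le_rfl).trans_lt hα
end
end

section
/- 1D generalized Lax–Friedrichs splitting property: let Û = (ρ̂, m̂, B̂, Ê) and Ǔ = (ρ̌, m̌, B̌, Ě) belong to 𝒢 with pressures p̂, p̌ > 0 and satisfy the 1D discrete divergence-free condition B̂₁ = B̌₁. Then for every α > α₁(Û, Ǔ), the state Ū := (1/2)( Û − F₁(Û)/α + Ǔ + F₁(Ǔ)/α ) belongs to 𝒢. -/
open scoped BigOperators

noncomputable section

/-!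
Write `Π(U; v*, B*) = 𝓔(U) + ρ|v − v*|²/2 + |B* − B|²/2`; it equals `U · n*(v*, B*) + |B*|²/2`,
which is affine in `U`, and `Π(U; v, B) = 𝓔(U)`. Taking `(v*, B*)` to be the velocity and field of
`Ū` therefore gives `2 𝓔(Ū) = Π(Û) + Π(Ǔ) − α⁻¹ (F₁(Û) − F₁(Ǔ)) · n*`.

In the flux difference the terms `B₁ (v* · B*)` cancel because `B̂₁ = B̌₁`. Splitting
`v*₁ = t + (v*₁ − t)` with `t = σ v̂₁ + (1 − σ) v̌₁` leaves one term per state, bounded by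
`(max (|v₁|, |t|) + 𝓢₁) Π`, and a coupling term bounded by `f(Û, Ǔ; σ) (Π(Û) + Π(Ǔ))`. The
per-state bound is where `𝓢₁` enters: `𝓢₁²` is the larger root of
`ρ S⁴ − (ρ 𝓢_s² + |B|²) S² + 𝓢_s² B₁² = 0`, which makes the remaining quadratic form nonnegative.
So the flux term is at most `α₁(Û, Ǔ; σ) (Π(Û) + Π(Ǔ))`, which is `< α (Π(Û) + Π(Ǔ))` for a
suitable `σ`.
-/

theorem normSq3_nonneg (a : Fin 3 → ℝ) : 0 ≤ normSq3 a :=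
  Finset.sum_nonneg fun _ _ => sq_nonneg _

theorem sq_le_normSq3 (a : Fin 3 → ℝ) (i : Fin 3) : a i ^ 2 ≤ normSq3 a :=
  Finset.single_le_sum (f := fun j => a j ^ 2) (fun _ _ => sq_nonneg _) (Finset.mem_univ i)

theorem normSq3_add_le (a b : Fin 3 → ℝ) :
    normSq3 (fun j => a j + b j) ≤ 2 * (normSq3 a + normSq3 b) := by
  simp only [normSq3, Fin.sum_univ_three]
  nlinarith [sq_nonneg (a 0 - b 0), sq_nonneg (a 1 - b 1), sq_nonneg (a 2 - b 2)]

theorem sq_dot3_le (a b : Fin 3 → ℝ) : dot3 a b ^ 2 ≤ normSq3 a * normSq3 b :=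
  Finset.sum_mul_sq_le_sq_mul_sq _ a b

theorem two_mul_abs_le_add_of_sq_le_mul {z p q : ℝ} (hp : 0 ≤ p) (hq : 0 ≤ q)
    (h : z ^ 2 ≤ p * q) : 2 * |z| ≤ p + q := by
  have := abs_le_of_sq_le_sq (a := z) (b := (p + q) / 2)
    (by nlinarith [sq_nonneg (p - q)]) (by positivity)
  linarith

theorem sq_mul_add_mul_le {ρ₁ ρ₂ : ℝ} (h₁ : 0 < ρ₁) (h₂ : 0 < ρ₂) (s t a b : ℝ) :
    (s * a + t * b) ^ 2 ≤ (s ^ 2 / ρ₁ + t ^ 2 / ρ₂) * (ρ₁ * a ^ 2 + ρ₂ * b ^ 2) := by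
  have key : ((s ^ 2 / ρ₁ + t ^ 2 / ρ₂) * (ρ₁ * a ^ 2 + ρ₂ * b ^ 2) - (s * a + t * b) ^ 2)
      * (ρ₁ * ρ₂) = (s * ρ₂ * b - t * ρ₁ * a) ^ 2 := by
    field_simp
    ring
  nlinarith [sq_nonneg (s * ρ₂ * b - t * ρ₁ * a), mul_pos h₁ h₂]

/-- `Π(U; v*, B*)`. -/
def relIntE (U : Fin 8 → ℝ) (vs Bs : Fin 3 → ℝ) : ℝ :=
  intE U + U 0 * normSq3 (fun j => velC U j - vs j) / 2 + normSq3 (fun j => Bs j - BC U j) / 2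

theorem relIntE_pos {U : Fin 8 → ℝ} (hU : U ∈ admisSet) (vs Bs : Fin 3 → ℝ) :
    0 < relIntE U vs Bs := by
  obtain ⟨hρ, hE⟩ := hU
  unfold relIntE
  positivity [normSq3_nonneg (fun j => velC U j - vs j), normSq3_nonneg (fun j => Bs j - BC U j)]

theorem dot8_nstar_add (U : Fin 8 → ℝ) (hρ : U 0 ≠ 0) (vs Bs : Fin 3 → ℝ) :
    dot8 U (nstar vs Bs) + normSq3 Bs / 2 = relIntE U vs Bs := by
  simp only [dot8, nstar, normSq3, Fin.sum_univ_three, Fin.isValue, Fin.sum_univ_eight,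
    Matrix.cons_val_zero, Matrix.cons_val_one, mul_neg, Matrix.cons_val, mul_one, relIntE, intE,
    mC, BC, velC]
  field_simp
  ring

theorem intE_eq_dot8_nstar {U : Fin 8 → ℝ} (hρ : U 0 ≠ 0) :
    intE U = dot8 U (nstar (velC U) (BC U)) + normSq3 (BC U) / 2 := by
  rw [dot8_nstar_add U hρ]
  simp [relIntE, normSq3]

theorem flux_apply_zero (p : ℝ) (i : Fin 3) (U : Fin 8 → ℝ) : flux p i U 0 = U 0 * velC U i :=
  rfl

theorem dot8_flux_nstar (p : ℝ) (U : Fin 8 → ℝ) (hρ : U 0 ≠ 0) (vs Bs : Fin 3 → ℝ) :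
    dot8 (flux p 0 U) (nstar vs Bs) + vs 0 * normSq3 Bs / 2 - U 4 * dot3 vs Bs
      = velC U 0 * (intE U + U 0 * normSq3 (fun j => velC U j - vs j) / 2)
        + vs 0 * normSq3 (fun j => Bs j - BC U j) / 2
        + ((velC U 0 - vs 0) * p
          + dot3 (fun j => Bs j - BC U j)
            (fun j => U 4 * (velC U j - vs j) - (velC U 0 - vs 0) * BC U j)) := by
  simp only [dot8, flux, Fin.isValue, velC, mC, Matrix.cons_val_zero, BC, ↓reduceIte, normSq3,
    Fin.sum_univ_three, Matrix.cons_val_one, Matrix.cons_val, zero_ne_one, add_zero, Fin.reduceEq,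
    dot3, nstar, Fin.sum_univ_eight, mul_neg, mul_one, intE]
  field_simp
  ring

section FastSpeed

variable {cs : ℝ} {U : Fin 8 → ℝ} {i : Fin 3}

theorem fastLike_nonneg : 0 ≤ fastLike cs U i :=
  mul_nonneg (by positivity) (Real.sqrt_nonneg _)

theorem exists_two_mul_fastLike_sq (hρ : 0 < U 0) :
    ∃ r, 0 ≤ r ∧
      r ^ 2 = (U 0 * cs ^ 2 - normSq3 (BC U)) ^ 2
        + 4 * U 0 * cs ^ 2 * (normSq3 (BC U) - BC U i ^ 2) ∧
      2 * U 0 * fastLike cs U i ^ 2 = U 0 * cs ^ 2 + normSq3 (BC U) + r := by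
  set N := normSq3 (BC U)
  set d := (cs ^ 2 + N / U 0) ^ 2 - 4 * cs ^ 2 * BC U i ^ 2 / U 0
  have hN : 0 ≤ N := normSq3_nonneg _
  have hperp : 0 ≤ N - BC U i ^ 2 := sub_nonneg.2 (sq_le_normSq3 _ _)
  have hd : U 0 ^ 2 * d = (U 0 * cs ^ 2 - N) ^ 2 + 4 * U 0 * cs ^ 2 * (N - BC U i ^ 2) := by
    simp only [d]
    field_simp
    ring
  have hd0 : 0 ≤ d := by
    have : 0 ≤ U 0 ^ 2 * d := by rw [hd]; positivity
    exact (mul_nonneg_iff_of_pos_left (by positivity)).1 this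
  refine ⟨U 0 * √d, by positivity, by rw [mul_pow, Real.sq_sqrt hd0, hd], ?_⟩
  have hS : fastLike cs U i = 1 / √2 * √(cs ^ 2 + N / U 0 + √d) := rfl
  rw [hS, mul_pow, div_pow, one_pow, Real.sq_sqrt zero_le_two, Real.sq_sqrt (by positivity)]
  field_simp

theorem sq_le_fastLike_sq (hρ : 0 < U 0) : cs ^ 2 ≤ fastLike cs U i ^ 2 := by
  obtain ⟨r, hr, hr2, hS⟩ := exists_two_mul_fastLike_sq (cs := cs) (i := i) hρ
  have hperp : 0 ≤ normSq3 (BC U) - BC U i ^ 2 := sub_nonneg.2 (sq_le_normSq3 _ _)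
  have : U 0 * cs ^ 2 - normSq3 (BC U) ≤ r := by
    refine (abs_le_of_sq_le_sq' ?_ hr).2
    rw [hr2]
    nlinarith [mul_nonneg (mul_nonneg hρ.le (sq_nonneg cs)) hperp]
  nlinarith

end FastSpeed

theorem normSq3_cross_add_le {cs : ℝ} {U : Fin 8 → ℝ} (hρ : 0 < U 0) (w : Fin 3 → ℝ) :
    normSq3 (fun j => U 4 * w j - w 0 * BC U j) + U 0 * cs ^ 2 * w 0 ^ 2
      ≤ U 0 * fastLike cs U 0 ^ 2 * normSq3 w := by
  obtain ⟨r, hr, hr2, hS⟩ := exists_two_mul_fastLike_sq (cs := cs) (i := 0) hρ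
  set S := fastLike cs U 0
  have hN : normSq3 (BC U) = U 4 ^ 2 + (U 5 ^ 2 + U 6 ^ 2) := by
    simp only [normSq3, BC, Fin.isValue, Fin.sum_univ_three, Matrix.cons_val_zero,
      Matrix.cons_val_one, Matrix.cons_val]
    ring
  have hB0 : BC U 0 = U 4 := rfl
  rw [hN, hB0] at hr2
  rw [hN] at hS
  -- the quartic `ρ S⁴ − (ρ c² + |B|²) S² + c² B₁² = 0` for `S²` reads `a b = B₁² (B₂² + B₃²)`
  set a := U 0 * (S ^ 2 - cs ^ 2) - (U 5 ^ 2 + U 6 ^ 2)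
  set b := U 0 * S ^ 2 - U 4 ^ 2
  have hab : a * b = U 4 ^ 2 * (U 5 ^ 2 + U 6 ^ 2) := by
    linear_combination
      (1 / 4) * (2 * U 0 * S ^ 2 - U 0 * cs ^ 2 - (U 4 ^ 2 + (U 5 ^ 2 + U 6 ^ 2)) + r) * hS
        + (1 / 4) * hr2
  have hsum : 0 ≤ a + b := by linarith
  have hprod : 0 ≤ U 4 ^ 2 * (U 5 ^ 2 + U 6 ^ 2) := by positivity
  have ha : 0 ≤ a := by nlinarith
  have hb : 0 ≤ b := by nlinarith
  have hcs : (w 1 * U 5 + w 2 * U 6) ^ 2 ≤ (w 1 ^ 2 + w 2 ^ 2) * (U 5 ^ 2 + U 6 ^ 2) := by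
    nlinarith [sq_nonneg (w 1 * U 6 - w 2 * U 5)]
  have hz2 : (U 4 * w 0 * (w 1 * U 5 + w 2 * U 6)) ^ 2
      ≤ a * w 0 ^ 2 * (b * (w 1 ^ 2 + w 2 ^ 2)) :=
    calc (U 4 * w 0 * (w 1 * U 5 + w 2 * U 6)) ^ 2
        ≤ U 4 ^ 2 * w 0 ^ 2 * ((w 1 ^ 2 + w 2 ^ 2) * (U 5 ^ 2 + U 6 ^ 2)) := by
          rw [mul_pow, mul_pow]; gcongr
      _ = a * w 0 ^ 2 * (b * (w 1 ^ 2 + w 2 ^ 2)) := by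
          linear_combination (-(w 0 ^ 2 * (w 1 ^ 2 + w 2 ^ 2))) * hab
  have hz := two_mul_abs_le_add_of_sq_le_mul (mul_nonneg ha (sq_nonneg (w 0)))
    (mul_nonneg hb (add_nonneg (sq_nonneg (w 1)) (sq_nonneg (w 2)))) hz2
  simp only [normSq3, Fin.sum_univ_three, BC, Matrix.cons_val_zero, Matrix.cons_val_one,
    Matrix.cons_val]
  linarith [neg_abs_le (U 4 * w 0 * (w 1 * U 5 + w 2 * U 6))]

section SoundSpeed

variable {p : ℝ} {U : Fin 8 → ℝ}

theorem sq_eq_sSound_sq_mul (hρ : 0 < U 0) (hE : 0 < intE U) :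
    p ^ 2 = sSound p U ^ 2 * (2 * U 0 * intE U) := by
  have he : 0 < 2 * (intE U / U 0) := by positivity
  rw [sSound, div_pow, mul_pow, Real.sq_sqrt he.le]
  field_simp

theorem sSound_pos (hρ : 0 < U 0) (hE : 0 < intE U) (hp : 0 < p) : 0 < sSound p U := by
  unfold sSound
  positivity

theorem sFast_pos (hρ : 0 < U 0) (hE : 0 < intE U) (hp : 0 < p) : 0 < sFast p U 0 := by
  have hc := sSound_pos hρ hE hp
  have := sq_le_fastLike_sq (cs := sSound p U) (i := 0) hρ
  show 0 < fastLike (sSound p U) U 0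
  nlinarith [fastLike_nonneg (cs := sSound p U) (U := U) (i := 0)]

/-- AM–GM, once for the pressure term (using `p² = 2ρ𝓔 𝓢_s²`) and once for the magnetic term;
`normSq3_cross_add_le` absorbs the rest. -/
theorem abs_add_dot3_cross_le (hρ : 0 < U 0) (hE : 0 < intE U) (hp : 0 < p) (w D : Fin 3 → ℝ) :
    |w 0 * p + dot3 D (fun j => U 4 * w j - w 0 * BC U j)|
      ≤ sFast p U 0 * (intE U + U 0 * normSq3 w / 2 + normSq3 D / 2) := by
  set K := fun j => U 4 * w j - w 0 * BC U j
  set c := sSound p U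
  set S := sFast p U 0
  have hS : 0 < S := sFast_pos hρ hE hp
  have hpres : 2 * |S * (w 0 * p)| ≤ U 0 * c ^ 2 * w 0 ^ 2 + S ^ 2 * (2 * intE U) := by
    refine two_mul_abs_le_add_of_sq_le_mul (by positivity) (by positivity) (le_of_eq ?_)
    rw [mul_pow, mul_pow, sq_eq_sSound_sq_mul (p := p) hρ hE]
    ring
  have hmag : 2 * |S * dot3 D K| ≤ S ^ 2 * normSq3 D + normSq3 K := by
    refine two_mul_abs_le_add_of_sq_le_mul (by positivity [normSq3_nonneg D])
      (normSq3_nonneg K) ?_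
    rw [mul_pow, mul_assoc]
    exact mul_le_mul_of_nonneg_left (sq_dot3_le D K) (sq_nonneg S)
  have hcross : normSq3 K + U 0 * c ^ 2 * w 0 ^ 2 ≤ U 0 * S ^ 2 * normSq3 w :=
    normSq3_cross_add_le hρ w
  have htri : S * |w 0 * p + dot3 D K| ≤ |S * (w 0 * p)| + |S * dot3 D K| :=
    calc S * |w 0 * p + dot3 D K| = |S * (w 0 * p) + S * dot3 D K| := by
          rw [← mul_add, abs_mul, abs_of_pos hS]
      _ ≤ _ := abs_add_le _ _
  refine le_of_mul_le_mul_left ?_ (by positivity : 0 < 2 * S)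
  linarith

end SoundSpeed

theorem fCoup_nonneg (U Ut : Fin 8 → ℝ) (σ : ℝ) : 0 ≤ fCoup U Ut σ := by
  unfold fCoup
  positivity

theorem fCoup_sq {U Ut : Fin 8 → ℝ} (hρ : 0 < U 0) (hρt : 0 < Ut 0) (σ : ℝ) :
    fCoup U Ut σ ^ 2
      = normSq3 (fun j => BC Ut j - BC U j) * (σ ^ 2 / U 0 + (1 - σ) ^ 2 / Ut 0) / 2 := by
  rw [fCoup, mul_pow, div_pow, Real.sq_sqrt (normSq3_nonneg _), Real.sq_sqrt zero_le_two,
    Real.sq_sqrt (by positivity)]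
  ring

theorem sq_sub_velC_mean_le {Uh Uc : Fin 8 → ℝ} (hρh : 0 < Uh 0) (hρc : 0 < Uc 0) (σ : ℝ)
    (vs : Fin 3 → ℝ) :
    (vs 0 - (σ * velC Uh 0 + (1 - σ) * velC Uc 0)) ^ 2
      ≤ (σ ^ 2 / Uh 0 + (1 - σ) ^ 2 / Uc 0)
        * (Uh 0 * normSq3 (fun j => velC Uh j - vs j)
          + Uc 0 * normSq3 (fun j => velC Uc j - vs j)) :=
  calc _ = (σ * (velC Uh 0 - vs 0) + (1 - σ) * (velC Uc 0 - vs 0)) ^ 2 := by ring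
    _ ≤ _ := sq_mul_add_mul_le hρh hρc _ _ _ _
    _ ≤ _ := by
      gcongr
      · exact sq_le_normSq3 (fun j => velC Uh j - vs j) 0
      · exact sq_le_normSq3 (fun j => velC Uc j - vs j) 0

/-- `|B* − B̂|² − |B* − B̌|² = (B̌ − B̂) · (2B* − B̂ − B̌)`, and `v*₁ − (σ v̂₁ + (1 − σ) v̌₁)` is
the `σ`-weighted combination of `v*₁ − v̂₁` and `v*₁ − v̌₁`: Cauchy–Schwarz on both factors. -/
theorem mul_sub_normSq3_le_fCoup {Uh Uc : Fin 8 → ℝ} (hUh : Uh ∈ admisSet) (hUc : Uc ∈ admisSet)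
    (σ : ℝ) (vs Bs : Fin 3 → ℝ) :
    (vs 0 - (σ * velC Uh 0 + (1 - σ) * velC Uc 0))
        * (normSq3 (fun j => Bs j - BC Uh j) - normSq3 (fun j => Bs j - BC Uc j))
      ≤ 2 * fCoup Uh Uc σ * (relIntE Uh vs Bs + relIntE Uc vs Bs) := by
  obtain ⟨hρh, hEh⟩ := hUh
  obtain ⟨hρc, hEc⟩ := hUc
  set f := fCoup Uh Uc σ
  set μ := vs 0 - (σ * velC Uh 0 + (1 - σ) * velC Uc 0)
  set δ := fun j => BC Uc j - BC Uh j
  set X := Uh 0 * normSq3 (fun j => velC Uh j - vs j)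
    + Uc 0 * normSq3 (fun j => velC Uc j - vs j)
  set Y := normSq3 (fun j => Bs j - BC Uh j) + normSq3 (fun j => Bs j - BC Uc j)
  have hX : 0 ≤ X := by
    positivity [normSq3_nonneg (fun j => velC Uh j - vs j),
      normSq3_nonneg (fun j => velC Uc j - vs j)]
  have hY : 0 ≤ Y := add_nonneg (normSq3_nonneg _) (normSq3_nonneg _)
  have hf := fCoup_nonneg Uh Uc σ
  have hdiff : normSq3 (fun j => Bs j - BC Uh j) - normSq3 (fun j => Bs j - BC Uc j)
      = dot3 δ (fun j => (Bs j - BC Uh j) + (Bs j - BC Uc j)) := by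
    simp only [normSq3, dot3, δ, Fin.sum_univ_three]
    ring
  have hμ := sq_sub_velC_mean_le hρh hρc σ vs
  have hdot : dot3 δ (fun j => (Bs j - BC Uh j) + (Bs j - BC Uc j)) ^ 2
      ≤ normSq3 δ * (2 * Y) :=
    (sq_dot3_le _ _).trans (mul_le_mul_of_nonneg_left (normSq3_add_le _ _) (normSq3_nonneg δ))
  have hz := two_mul_abs_le_add_of_sq_le_mul (mul_nonneg hf hX) (mul_nonneg hf hY)
    (z := μ * dot3 δ (fun j => (Bs j - BC Uh j) + (Bs j - BC Uc j)) / 2) (by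
      rw [div_pow, mul_pow]
      calc _ ≤ (σ ^ 2 / Uh 0 + (1 - σ) ^ 2 / Uc 0) * X * (normSq3 δ * (2 * Y)) / 2 ^ 2 := by
            gcongr
        _ = f ^ 2 * X * Y := by rw [fCoup_sq hρh hρc]; ring
        _ = _ := by ring)
  have hrel : X + Y ≤ 2 * (relIntE Uh vs Bs + relIntE Uc vs Bs) := by
    simp only [relIntE, X, Y]
    linarith
  rw [hdiff]
  linarith [le_abs_self (μ * dot3 δ (fun j => (Bs j - BC Uh j) + (Bs j - BC Uc j)) / 2),
    mul_le_mul_of_nonneg_left hrel hf]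

theorem abs_dot8_flux_nstar_sub_le {p : ℝ} {U : Fin 8 → ℝ} (hU : U ∈ admisSet) (hp : 0 < p)
    (vs Bs : Fin 3 → ℝ) :
    |dot8 (flux p 0 U) (nstar vs Bs) + vs 0 * normSq3 Bs / 2 - U 4 * dot3 vs Bs
        - (velC U 0 * (intE U + U 0 * normSq3 (fun j => velC U j - vs j) / 2)
          + vs 0 * normSq3 (fun j => Bs j - BC U j) / 2)|
      ≤ sFast p U 0 * relIntE U vs Bs := by
  rw [dot8_flux_nstar p U hU.1.ne', relIntE]
  convert abs_add_dot3_cross_le hU.1 hU.2 hp (fun j => velC U j - vs j) (fun j => Bs j - BC U j)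
    using 2
  ring

theorem mul_add_mul_le_mul_add {A a b x y : ℝ} (ha : a ≤ A) (hb : b ≤ A) (hx : 0 ≤ x)
    (hy : 0 ≤ y) : a * x + b * y ≤ A * (x + y) := by
  nlinarith

theorem dot8_flux_sub_le {Uh Uc : Fin 8 → ℝ} (hUh : Uh ∈ admisSet) (hUc : Uc ∈ admisSet)
    {ph pc : ℝ} (hph : 0 < ph) (hpc : 0 < pc) (hB : Uh 4 = Uc 4) (σ : ℝ) (vs Bs : Fin 3 → ℝ) :
    dot8 (flux ph 0 Uh) (nstar vs Bs) - dot8 (flux pc 0 Uc) (nstar vs Bs)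
      ≤ alphaSig 0 Uh Uc ph pc σ * (relIntE Uh vs Bs + relIntE Uc vs Bs) := by
  have hFh := (abs_le.1 (abs_dot8_flux_nstar_sub_le hUh hph vs Bs)).2
  have hFc := (abs_le.1 (abs_dot8_flux_nstar_sub_le hUc hpc vs Bs)).1
  have hcoup := mul_sub_normSq3_le_fCoup hUh hUc σ vs Bs
  set Kh := intE Uh + Uh 0 * normSq3 (fun j => velC Uh j - vs j) / 2
  set Kc := intE Uc + Uc 0 * normSq3 (fun j => velC Uc j - vs j) / 2
  set Dh := normSq3 (fun j => Bs j - BC Uh j)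
  set Dc := normSq3 (fun j => Bs j - BC Uc j)
  set t := σ * velC Uh 0 + (1 - σ) * velC Uc 0
  set A := max (max (|velC Uh 0| + sFast ph Uh 0) (|velC Uc 0| + sFast pc Uc 0))
    (|t| + max (sFast ph Uh 0) (sFast pc Uc 0))
  have hrelh : relIntE Uh vs Bs = Kh + Dh / 2 := rfl
  have hrelc : relIntE Uc vs Bs = Kc + Dc / 2 := rfl
  obtain ⟨hρh, hEh⟩ := hUh
  obtain ⟨hρc, hEc⟩ := hUc
  have hKh : 0 ≤ Kh := by
    simp only [Kh]; positivity [normSq3_nonneg (fun j => velC Uh j - vs j)]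
  have hKc : 0 ≤ Kc := by
    simp only [Kc]; positivity [normSq3_nonneg (fun j => velC Uc j - vs j)]
  have hDh : 0 ≤ Dh / 2 := div_nonneg (normSq3_nonneg _) zero_le_two
  have hDc : 0 ≤ Dc / 2 := div_nonneg (normSq3_nonneg _) zero_le_two
  have hcommon : Uh 4 * dot3 vs Bs = Uc 4 * dot3 vs Bs := by rw [hB]
  have hvh : velC Uh 0 * Kh ≤ |velC Uh 0| * Kh := mul_le_mul_of_nonneg_right (le_abs_self _) hKh
  have hvc : -velC Uc 0 * Kc ≤ |velC Uc 0| * Kc := mul_le_mul_of_nonneg_right (neg_le_abs _) hKc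
  have ht : t * (Dh / 2 - Dc / 2) ≤ |t| * (Dh / 2 + Dc / 2) := by
    nlinarith [le_abs_self t, neg_le_abs t]
  have hAh : (|velC Uh 0| + sFast ph Uh 0) * Kh + (|t| + sFast ph Uh 0) * (Dh / 2)
      ≤ A * (Kh + Dh / 2) :=
    mul_add_mul_le_mul_add (le_max_of_le_left (le_max_left _ _))
      (le_max_of_le_right (by gcongr; exact le_max_left _ _)) hKh hDh
  have hAc : (|velC Uc 0| + sFast pc Uc 0) * Kc + (|t| + sFast pc Uc 0) * (Dc / 2)
      ≤ A * (Kc + Dc / 2) :=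
    mul_add_mul_le_mul_add (le_max_of_le_left (le_max_right _ _))
      (le_max_of_le_right (by gcongr; exact le_max_right _ _)) hKc hDc
  have hα : alphaSig 0 Uh Uc ph pc σ = A + fCoup Uh Uc σ := rfl
  rw [hα, hrelh, hrelc]
  rw [hrelh] at hFh hcoup
  rw [hrelc] at hFc hcoup
  linarith

theorem abs_velC_lt_of_alphaSig_lt {i : Fin 3} {U Ut : Fin 8 → ℝ} {p pt σ α : ℝ}
    (h : alphaSig i U Ut p pt σ < α) : |velC U i| < α ∧ |velC Ut i| < α := by
  have hS : 0 ≤ sFast p U i := fastLike_nonneg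
  have hSt : 0 ≤ sFast pt Ut i := fastLike_nonneg
  have hf := fCoup_nonneg U Ut σ
  have h1 : |velC U i| + sFast p U i ≤ alphaSig i U Ut p pt σ - fCoup U Ut σ :=
    (le_max_left _ _).trans (le_max_left _ _) |>.trans_eq (by unfold alphaSig; ring)
  have h2 : |velC Ut i| + sFast pt Ut i ≤ alphaSig i U Ut p pt σ - fCoup U Ut σ :=
    (le_max_right _ _).trans (le_max_left _ _) |>.trans_eq (by unfold alphaSig; ring)
  constructor <;> linarith

theorem two_mul_intE_eq_of_eq_smul {U Uh Uc Fh Fc : Fin 8 → ℝ} {α : ℝ}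
    (hU : U = (1 / 2 : ℝ) • (Uh - α⁻¹ • Fh + Uc + α⁻¹ • Fc))
    (hρ : U 0 ≠ 0) (hρh : Uh 0 ≠ 0) (hρc : Uc 0 ≠ 0) :
    2 * intE U = relIntE Uh (velC U) (BC U) + relIntE Uc (velC U) (BC U)
      - α⁻¹ * (dot8 Fh (nstar (velC U) (BC U)) - dot8 Fc (nstar (velC U) (BC U))) := by
  have hUk : ∀ k, U k = (Uh k - α⁻¹ * Fh k + Uc k + α⁻¹ * Fc k) / 2 := fun k => by
    rw [hU]
    simp only [Pi.smul_apply, Pi.add_apply, Pi.sub_apply, smul_eq_mul]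
    ring
  rw [intE_eq_dot8_nstar hρ, ← dot8_nstar_add Uh hρh, ← dot8_nstar_add Uc hρc]
  simp only [dot8, Fin.sum_univ_eight, hUk]
  ring

/-- 1D generalized Lax–Friedrichs splitting property: if
`Û, Ǔ ∈ 𝒢` with pressures `p̂, p̌ > 0` satisfy `B̂₁ = B̌₁`, then for every
`α > α₁(Û, Ǔ)`, the state `Ū = ½(Û − F₁(Û)/α + Ǔ + F₁(Ǔ)/α)` is in `𝒢`. -/
theorem gLF_splitting_1D (Uh Uc : Fin 8 → ℝ)
    (hUh : Uh ∈ admisSet) (hUc : Uc ∈ admisSet)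
    (ph pc : ℝ) (hph : 0 < ph) (hpc : 0 < pc)
    (hB : Uh 4 = Uc 4) (α : ℝ) (hα : alphaInf 0 Uh Uc ph pc < α) :
    (1 / 2 : ℝ) • (Uh - α⁻¹ • flux ph 0 Uh + Uc + α⁻¹ • flux pc 0 Uc)
      ∈ admisSet := by
  obtain ⟨σ, hσ⟩ : ∃ σ, alphaSig 0 Uh Uc ph pc σ < α := exists_lt_of_ciInf_lt hα
  obtain ⟨hvh, hvc⟩ := abs_velC_lt_of_alphaSig_lt hσ
  have hα0 : 0 < α := (abs_nonneg _).trans_lt hvh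
  set U := (1 / 2 : ℝ) • (Uh - α⁻¹ • flux ph 0 Uh + Uc + α⁻¹ • flux pc 0 Uc) with hU
  have hρ : 0 < U 0 := by
    have e : U 0 = (Uh 0 * (α - velC Uh 0) + Uc 0 * (α + velC Uc 0)) / (2 * α) := by
      simp only [U, Pi.smul_apply, Pi.add_apply, Pi.sub_apply, smul_eq_mul, flux_apply_zero]
      field_simp
      ring
    rw [e]
    have := abs_lt.1 hvh
    have := abs_lt.1 hvc
    exact div_pos (add_pos (mul_pos hUh.1 (by linarith)) (mul_pos hUc.1 (by linarith)))
      (by positivity)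
  refine ⟨hρ, ?_⟩
  have hE := two_mul_intE_eq_of_eq_smul hU hρ.ne' hUh.1.ne' hUc.1.ne'
  have hF := dot8_flux_sub_le hUh hUc hph hpc hB σ (velC U) (BC U)
  have hpos := add_pos (relIntE_pos hUh (velC U) (BC U)) (relIntE_pos hUc (velC U) (BC U))
  have hlt := (inv_mul_lt_iff₀ hα0).2 (hF.trans_lt (mul_lt_mul_of_pos_right hσ hpos))
  linarith
end
end

section
/- The 2D Lax–Friedrichs scheme does not increase the discrete divergence error: let Δx, Δy, Δt > 0, α₁, α₂ > 0 with λ₁ := α₁Δt/Δx, λ₂ := α₂Δt/Δy and 0 < λ₁ + λ₂ ≤ 1, and let Ū : ℤ² → ℝ⁸ have positive density components. Define Ū^{new}_{ij} := Ū_{ij} − (Δt/Δx)·( F̂₁(Ū_{ij}, Ū_{i+1,j}) − F̂₁(Ū_{i−1,j}, Ū_{ij}) ) − (Δt/Δy)·( F̂₂(Ū_{ij}, Ū_{i,j+1}) − F̂₂(Ū_{i,j−1}, Ū_{ij}) ), with F̂_ℓ the LF flux of viscosity α_ℓ. Then for all (i,j): div_{ij}Ū^{new} = (1 − λ₁ −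 λ₂)·div_{ij}Ū + (λ₁/2)·( div_{i+1,j}Ū + div_{i−1,j}Ū ) + (λ₂/2)·( div_{i,j+1}Ū + div_{i,j−1}Ū ). Consequently, if |div_{ij}Ū| ≤ ε for all (i,j) then |div_{ij}Ū^{new}| ≤ ε for all (i,j); in particular, if div_{ij}Ū = 0 for all (i,j) then div_{ij}Ū^{new} = 0 for all (i,j). -/
open scoped BigOperators

noncomputable section

/-- Discrete divergence of a 2D grid of states. -/
def discDiv (Δx Δy : ℝ) (V : ℤ → ℤ → Fin 8 → ℝ) (i j : ℤ) : ℝ :=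
  (V (i + 1) j 4 - V (i - 1) j 4) / (2 * Δx)
    + (V i (j + 1) 5 - V i (j - 1) 5) / (2 * Δy)

/-- One step of the 2D Lax–Friedrichs scheme. -/
def lfUpdate2D (P : ℝ → ℝ → ℝ) (Δx Δy Δt α₁ α₂ : ℝ)
    (U : ℤ → ℤ → Fin 8 → ℝ) (i j : ℤ) : Fin 8 → ℝ :=
  U i j
    - (Δt / Δx) • (lfFlux P α₁ 0 (U i j) (U (i + 1) j)
                    - lfFlux P α₁ 0 (U (i - 1) j) (U i j))
    - (Δt / Δy) • (lfFlux P α₂ 1 (U i j) (U i (j + 1))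
                    - lfFlux P α₂ 1 (U i (j - 1)) (U i j))

/-- Cross term appearing in the transverse magnetic fluxes. -/
def crossG (U : Fin 8 → ℝ) : ℝ := velC U 1 * BC U 0 - BC U 1 * velC U 0

lemma flux0_4 (p : ℝ) (U : Fin 8 → ℝ) : flux p 0 U 4 = 0 := by
  show velC U 0 * BC U 0 - BC U 0 * velC U 0 = 0; ring

lemma flux1_5 (p : ℝ) (U : Fin 8 → ℝ) : flux p 1 U 5 = 0 := by
  show velC U 1 * BC U 1 - BC U 1 * velC U 1 = 0; ring

lemma flux1_4 (p : ℝ) (U : Fin 8 → ℝ) : flux p 1 U 4 = crossG U := rfl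

lemma flux0_5 (p : ℝ) (U : Fin 8 → ℝ) : flux p 0 U 5 = -crossG U := by
  show velC U 0 * BC U 1 - BC U 0 * velC U 1 = -(velC U 1 * BC U 0 - BC U 1 * velC U 0); ring

lemma lfUpdate2D_4 (P : ℝ → ℝ → ℝ) (Δx Δy Δt α₁ α₂ : ℝ)
    (U : ℤ → ℤ → Fin 8 → ℝ) (i j : ℤ) :
    lfUpdate2D P Δx Δy Δt α₁ α₂ U i j 4
      = U i j 4
        + (Δt / Δx) * (α₁ / 2) * (U (i + 1) j 4 - 2 * U i j 4 + U (i - 1) j 4)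
        + (Δt / Δy) * (α₂ / 2) * (U i (j + 1) 4 - 2 * U i j 4 + U i (j - 1) 4)
        - (Δt / Δy) / 2 * (crossG (U i (j + 1)) - crossG (U i (j - 1))) := by
  simp only [lfUpdate2D, lfFlux, Pi.sub_apply, Pi.add_apply, Pi.smul_apply, smul_eq_mul,
    flux0_4, flux1_4]
  ring

lemma lfUpdate2D_5 (P : ℝ → ℝ → ℝ) (Δx Δy Δt α₁ α₂ : ℝ)
    (U : ℤ → ℤ → Fin 8 → ℝ) (i j : ℤ) :
    lfUpdate2D P Δx Δy Δt α₁ α₂ U i j 5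
      = U i j 5
        + (Δt / Δx) * (α₁ / 2) * (U (i + 1) j 5 - 2 * U i j 5 + U (i - 1) j 5)
        + (Δt / Δy) * (α₂ / 2) * (U i (j + 1) 5 - 2 * U i j 5 + U i (j - 1) 5)
        + (Δt / Δx) / 2 * (crossG (U (i + 1) j) - crossG (U (i - 1) j)) := by
  simp only [lfUpdate2D, lfFlux, Pi.sub_apply, Pi.add_apply, Pi.smul_apply, smul_eq_mul,
    flux1_5, flux0_5]
  ring

/-- the 2D LF scheme does not increase the discrete divergence
error: the new discrete divergence is the stated convex combination of old
ones; consequently a uniform bound `ε` on `|div|` is preserved, and exact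
discrete divergence-freeness is preserved. -/
theorem lf_scheme_2D_div (P : ℝ → ℝ → ℝ)
    (Δx Δy Δt α₁ α₂ : ℝ) (hΔx : 0 < Δx) (hΔy : 0 < Δy) (hΔt : 0 < Δt)
    (hα₁ : 0 < α₁) (hα₂ : 0 < α₂)
    (hCFL : 0 < α₁ * Δt / Δx + α₂ * Δt / Δy
      ∧ α₁ * Δt / Δx + α₂ * Δt / Δy ≤ 1)
    (U : ℤ → ℤ → Fin 8 → ℝ) (hρ : ∀ i j : ℤ, 0 < U i j 0) :
    (∀ i j : ℤ,
      discDiv Δx Δy (lfUpdate2D P Δx Δy Δt α₁ α₂ U) i j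
        = (1 - α₁ * Δt / Δx - α₂ * Δt / Δy) * discDiv Δx Δy U i j
          + (α₁ * Δt / Δx) / 2 * (discDiv Δx Δy U (i + 1) j + discDiv Δx Δy U (i - 1) j)
          + (α₂ * Δt / Δy) / 2 * (discDiv Δx Δy U i (j + 1) + discDiv Δx Δy U i (j - 1))) ∧
    (∀ ε : ℝ, (∀ i j : ℤ, |discDiv Δx Δy U i j| ≤ ε) →
      ∀ i j : ℤ, |discDiv Δx Δy (lfUpdate2D P Δx Δy Δt α₁ α₂ U) i j| ≤ ε) ∧
    ((∀ i j : ℤ, discDiv Δx Δy U i j = 0) →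
      ∀ i j : ℤ, discDiv Δx Δy (lfUpdate2D P Δx Δy Δt α₁ α₂ U) i j = 0) := by
  have hx : (Δx:ℝ) ≠ 0 := ne_of_gt hΔx
  have hy : (Δy:ℝ) ≠ 0 := ne_of_gt hΔy
  have key : ∀ i j : ℤ,
      discDiv Δx Δy (lfUpdate2D P Δx Δy Δt α₁ α₂ U) i j
        = (1 - α₁ * Δt / Δx - α₂ * Δt / Δy) * discDiv Δx Δy U i j
          + (α₁ * Δt / Δx) / 2 * (discDiv Δx Δy U (i + 1) j + discDiv Δx Δy U (i - 1) j)
          + (α₂ * Δt / Δy) / 2 * (discDiv Δx Δy U i (j + 1) + discDiv Δx Δy U i (j - 1)) := by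
    intro i j
    simp only [discDiv, lfUpdate2D_4, lfUpdate2D_5, add_sub_cancel_right, sub_add_cancel]
    field_simp
    ring
  refine ⟨key, ?_, ?_⟩
  · intro ε hε i j
    rw [key]
    have hl1 : 0 ≤ α₁ * Δt / Δx := by positivity
    have hl2 : 0 ≤ α₂ * Δt / Δy := by positivity
    have h1 : 0 ≤ 1 - α₁ * Δt / Δx - α₂ * Δt / Δy := by linarith [hCFL.2]
    have hε0 : 0 ≤ ε := le_trans (abs_nonneg _) (hε i j)
    calc |(1 - α₁ * Δt / Δx - α₂ * Δt / Δy) * discDiv Δx Δy U i j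
          + (α₁ * Δt / Δx) / 2 * (discDiv Δx Δy U (i + 1) j + discDiv Δx Δy U (i - 1) j)
          + (α₂ * Δt / Δy) / 2 * (discDiv Δx Δy U i (j + 1) + discDiv Δx Δy U i (j - 1))|
        ≤ |(1 - α₁ * Δt / Δx - α₂ * Δt / Δy) * discDiv Δx Δy U i j|
          + |(α₁ * Δt / Δx) / 2 * (discDiv Δx Δy U (i + 1) j + discDiv Δx Δy U (i - 1) j)|
          + |(α₂ * Δt / Δy) / 2 * (discDiv Δx Δy U i (j + 1) + discDiv Δx Δy U i (j - 1))| := by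
          exact (abs_add_le _ _).trans (by gcongr; exact abs_add_le _ _)
      _ ≤ (1 - α₁ * Δt / Δx - α₂ * Δt / Δy) * ε
          + (α₁ * Δt / Δx) / 2 * (ε + ε) + (α₂ * Δt / Δy) / 2 * (ε + ε) := by
          gcongr ?_ + ?_ + ?_
          · rw [abs_mul, abs_of_nonneg h1]
            exact mul_le_mul_of_nonneg_left (hε i j) h1
          · rw [abs_mul, abs_of_nonneg (by positivity)]
            refine mul_le_mul_of_nonneg_left ?_ (by positivity)
            exact (abs_add_le _ _).trans (add_le_add (hε _ _) (hε _ _))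
          · rw [abs_mul, abs_of_nonneg (by positivity)]
            refine mul_le_mul_of_nonneg_left ?_ (by positivity)
            exact (abs_add_le _ _).trans (add_le_add (hε _ _) (hε _ _))
      _ = ε := by ring
  · intro h0 i j
    rw [key]
    simp [h0]
end
end
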